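/- arXiv:0707.1857 — 4 statements merged into one kernel-verified Lean document; each statement's English description precedes it below -/
import Mathlib

section
/- Let p ≥ 2 be an integer and set A_p = (−1)^p · C(2p,p) / C(4p−1,p). Then for every real number t one has Σ_{i=0}^{2p} (−1)^i C(2p,i) · binom(t, 4p−1−i) · binom(t, 2p+i−1) = A_p · binom(t, 3p−1) · binom(t+p, 3p−1). (Equivalently, this is an identity of polynomials in t.) -/
open Finset Polynomial fwdDiff

lemma fd_iter_zero_fun : ∀ m : ℕ, (Δ_[(1:ℝ)])^[m] (fun _ : ℝ => (0:ℝ)) = fun _ => 0 := by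
  intro m
  induction m with
  | zero => rfl
  | succ m ih => rw [Function.iterate_succ, Function.comp_apply]
                 have : Δ_[(1:ℝ)] (fun _ : ℝ => (0:ℝ)) = fun _ : ℝ => (0:ℝ) := by
                   funext x; simp [fwdDiff]
                 rw [this, ih]

lemma fd_zero : ∀ (n : ℕ) (q : ℝ[X]), q.natDegree < n →
    (Δ_[(1:ℝ)])^[n] (fun x : ℝ => eval x q) = fun _ => 0 := by
  intro n
  induction n with
  | zero => intro q hq; omega
  | succ n ih =>
    intro q hq
    rw [Function.iterate_succ, Function.comp_apply]
    by_cases h0 : q.natDegree = 0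
    · obtain ⟨c, rfl⟩ := natDegree_eq_zero.mp h0
      have h1 : Δ_[(1:ℝ)] (fun x : ℝ => eval x (C c)) = fun _ : ℝ => (0:ℝ) := by
        funext x; simp [fwdDiff]
      rw [h1, fd_iter_zero_fun]
    · set r : ℝ[X] := q.comp (X + C 1) - q with hr
      have hev : Δ_[(1:ℝ)] (fun x : ℝ => eval x q) = fun x : ℝ => eval x r := by
        funext x; simp [fwdDiff, hr, eval_comp]
      rw [hev]
      apply ih
      rcases eq_or_ne r 0 with h | h
      · rw [h]; simpa using Nat.pos_of_ne_zero (by omega)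
      · have hq0 : q ≠ 0 := fun hh => h0 (by simp [hh])
        have hxc : (X + C (1:ℝ)).natDegree = 1 := by
          simpa using natDegree_X_add_C (1:ℝ)
        have hlc : (q.comp (X + C 1)).leadingCoeff = q.leadingCoeff := by
          rw [leadingCoeff_comp (by rw [hxc]; omega)]
          have : (X + C (1:ℝ)).leadingCoeff = 1 := (monic_X_add_C 1).leadingCoeff
          rw [this]; simp
        have hc0 : q.comp (X + C 1) ≠ 0 := by
          intro hh
          apply hq0
          rw [← leadingCoeff_eq_zero, ← hlc, hh, leadingCoeff_zero]
        have hdeg : (q.comp (X + C 1)).degree = q.degree := by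
          rw [degree_eq_natDegree hc0, degree_eq_natDegree hq0, natDegree_comp, hxc, mul_one]
        have hlt : r.degree < q.degree := by
          rw [← hdeg]; exact degree_sub_lt hdeg hc0 hlc
        have := natDegree_lt_natDegree h hlt
        omega

lemma fd_sum (n : ℕ) (q : ℝ[X]) (hq : q.natDegree < n) :
    ∑ i ∈ range (n+1), (-1:ℝ)^i * (n.choose i) * eval (i:ℝ) q = 0 := by
  have h := fwdDiff_iter_eq_sum_shift (1:ℝ) (fun x : ℝ => eval x q) n 0
  rw [fd_zero n q hq] at h
  have h2 : (0:ℝ) = ∑ k ∈ range (n+1), ((-1:ℝ)^(n-k) * (n.choose k)) * eval (k:ℝ) q := by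
    simpa [zsmul_eq_mul] using h
  have h3 : ∑ k ∈ range (n+1), ((-1:ℝ)^(n-k) * (n.choose k)) * eval (k:ℝ) q
      = (-1:ℝ)^n * ∑ i ∈ range (n+1), (-1:ℝ)^i * (n.choose i) * eval (i:ℝ) q := by
    rw [mul_sum]
    apply sum_congr rfl
    intro k hk
    have hkn : k ≤ n := by simpa [Nat.lt_succ_iff] using hk
    have hkk : (-1:ℝ)^k * (-1:ℝ)^k = 1 := by
      rw [← pow_add]; exact Even.neg_one_pow ⟨k, rfl⟩
    have hsign : (-1:ℝ)^(n-k) = (-1:ℝ)^n * (-1:ℝ)^k := by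
      calc (-1:ℝ)^(n-k) = (-1:ℝ)^(n-k) * ((-1:ℝ)^k * (-1:ℝ)^k) := by rw [hkk, mul_one]
        _ = (-1:ℝ)^(n-k+k) * (-1:ℝ)^k := by rw [pow_add]; ring
        _ = (-1:ℝ)^n * (-1:ℝ)^k := by rw [Nat.sub_add_cancel hkn]
    rw [hsign]; ring
  rw [h3] at h2
  rcases mul_eq_zero.mp h2.symm with h4 | h4
  · exact absurd h4 (by positivity)
  · exact h4
open Finset

lemma prod_Ico_shift (a b j : ℕ) : ∏ k ∈ Ico a b, (j+k) = ∏ m ∈ Ico (a+j) (b+j), m := by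
  rw [prod_Ico_eq_prod_range, prod_Ico_eq_prod_range]
  have h : b + j - (a+j) = b - a := by omega
  rw [h]
  exact prod_congr rfl (fun r _ => by omega)

lemma prod_Ico_mul_factorial (a b : ℕ) (h : a ≤ b) :
    (∏ m ∈ Ico (a+1) (b+1), m) * a.factorial = b.factorial := by
  induction b, h using Nat.le_induction with
  | base => simp
  | succ b hb ih =>
    rw [prod_Ico_succ_top (by omega), Nat.factorial_succ]
    rw [mul_comm (∏ m ∈ Ico (a+1) (b+1), m) (b+1), mul_assoc, ih]

lemma Wnat (p i j : ℕ) (hp : 2 ≤ p) (hi : i ≤ 2*p) (hj : 1 ≤ j) :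
    (∏ k ∈ Ico (2*p-1) (4*p-1-i), (j+k)) * (∏ k ∈ Ico (2*p-1) (2*p+i-1), (j+k))
      * ((2*p-2+j).factorial)^2
    = ((∏ r ∈ range (j-1), (4*p+r-i)) * (∏ r ∈ range (j-1), (2*p+i+r)))
      * (4*p-1-i).factorial * (2*p+i-1).factorial := by
  have s1 : ∏ k ∈ Ico (2*p-1) (4*p-1-i), (j+k) = ∏ m ∈ Ico (2*p-1+j) (4*p-1-i+j), m :=
    prod_Ico_shift _ _ _
  have s1' : ∏ k ∈ Ico (2*p-1) (2*p+i-1), (j+k) = ∏ m ∈ Ico (2*p-1+j) (2*p+i-1+j), m :=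
    prod_Ico_shift _ _ _
  have s2 : (∏ m ∈ Ico (2*p-1+j) (4*p-1-i+j), m) * (2*p-2+j).factorial
      = (4*p-2+j-i).factorial := by
    have h := prod_Ico_mul_factorial (2*p-2+j) (4*p-2+j-i) (by omega)
    have e1 : 2*p-2+j+1 = 2*p-1+j := by omega
    have e2 : 4*p-2+j-i+1 = 4*p-1-i+j := by omega
    rwa [e1, e2] at h
  have s2' : (∏ m ∈ Ico (2*p-1+j) (2*p+i-1+j), m) * (2*p-2+j).factorial
      = (2*p-2+i+j).factorial := by
    have h := prod_Ico_mul_factorial (2*p-2+j) (2*p-2+i+j) (by omega)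
    have e1 : 2*p-2+j+1 = 2*p-1+j := by omega
    have e2 : 2*p-2+i+j+1 = 2*p+i-1+j := by omega
    rwa [e1, e2] at h
  have s3 : (∏ m ∈ Ico (4*p-i) (4*p-1+j-i), m) * (4*p-1-i).factorial
      = (4*p-2+j-i).factorial := by
    have h := prod_Ico_mul_factorial (4*p-1-i) (4*p-2+j-i) (by omega)
    have e1 : 4*p-1-i+1 = 4*p-i := by omega
    have e2 : 4*p-2+j-i+1 = 4*p-1+j-i := by omega
    rwa [e1, e2] at h
  have s3' : (∏ m ∈ Ico (2*p+i) (2*p+i+j-1), m) * (2*p+i-1).factorial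
      = (2*p-2+i+j).factorial := by
    have h := prod_Ico_mul_factorial (2*p+i-1) (2*p-2+i+j) (by omega)
    have e1 : 2*p+i-1+1 = 2*p+i := by omega
    have e2 : 2*p-2+i+j+1 = 2*p+i+j-1 := by omega
    rwa [e1, e2] at h
  have s4 : ∏ m ∈ Ico (4*p-i) (4*p-1+j-i), m = ∏ r ∈ range (j-1), (4*p+r-i) := by
    rw [prod_Ico_eq_prod_range]
    have h : 4*p-1+j-i - (4*p-i) = j-1 := by omega
    rw [h]
    exact prod_congr rfl (fun r _ => by omega)
  have s4' : ∏ m ∈ Ico (2*p+i) (2*p+i+j-1), m = ∏ r ∈ range (j-1), (2*p+i+r) := by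
    rw [prod_Ico_eq_prod_range]
    have h : 2*p+i+j-1 - (2*p+i) = j-1 := by omega
    rw [h]
    all_goals exact prod_congr rfl (fun r _ => by omega)
  calc (∏ k ∈ Ico (2*p-1) (4*p-1-i), (j+k)) * (∏ k ∈ Ico (2*p-1) (2*p+i-1), (j+k))
      * ((2*p-2+j).factorial)^2
      = ((∏ m ∈ Ico (2*p-1+j) (4*p-1-i+j), m) * (2*p-2+j).factorial)
        * ((∏ m ∈ Ico (2*p-1+j) (2*p+i-1+j), m) * (2*p-2+j).factorial) := by
        rw [s1, s1']; ring
    _ = (4*p-2+j-i).factorial * (2*p-2+i+j).factorial := by rw [s2, s2']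
    _ = ((∏ m ∈ Ico (4*p-i) (4*p-1+j-i), m) * (4*p-1-i).factorial)
        * ((∏ m ∈ Ico (2*p+i) (2*p+i+j-1), m) * (2*p+i-1).factorial) := by rw [s3, s3']
    _ = _ := by rw [s4, s4']; ring


noncomputable def Pp (p : ℕ) : Polynomial ℝ := ∏ k ∈ range (2*p-1), (X - C (k:ℝ))
noncomputable def Tp (p i : ℕ) : Polynomial ℝ :=
  (∏ k ∈ Ico (2*p-1) (4*p-1-i), (X - C (k:ℝ))) * (∏ k ∈ Ico (2*p-1) (2*p+i-1), (X - C (k:ℝ)))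
noncomputable def Rp (p : ℕ) : Polynomial ℝ :=
  (∏ k ∈ Ico (2*p-1) (3*p-1), (X - C (k:ℝ))) * (∏ k ∈ range p, (X + C ((p:ℝ) - k)))
noncomputable def Qp (p j : ℕ) : Polynomial ℝ :=
  (∏ r ∈ range (j-1), (C (((4*p+r:ℕ)):ℝ) - X)) * ∏ r ∈ range (j-1), (X + C (((2*p+r:ℕ)):ℝ))
noncomputable def coefT (p i : ℕ) : ℝ :=
  (-1)^i * (Nat.choose (2*p) i) / (((4*p-1-i).factorial : ℝ) * ((2*p+i-1).factorial : ℝ))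
noncomputable def coefR (p : ℕ) : ℝ :=
  ((-1)^p * (Nat.choose (2*p) p : ℝ) / (Nat.choose (4*p-1) p : ℝ)) / (((3*p-1).factorial : ℝ))^2
noncomputable def Ep (p : ℕ) : Polynomial ℝ :=
  (∑ i ∈ range (2*p+1), C (coefT p i) * Tp p i) - C (coefR p) * Rp p

lemma eval_T_zero_high (p : ℕ) (hp : 2 ≤ p) {s i : ℕ} (hs : s < p) (hi : i ≤ 2*p) :
    eval ((2*p-1+s : ℕ):ℝ) (Tp p i) = 0 := by
  rw [Tp, eval_mul, eval_prod, eval_prod]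
  by_cases hc : 2*p-1+s < 4*p-1-i
  · apply mul_eq_zero_of_left
    apply prod_eq_zero (i := 2*p-1+s) (mem_Ico.mpr ⟨by omega, hc⟩)
    simp
  · apply mul_eq_zero_of_right
    apply prod_eq_zero (i := 2*p-1+s) (mem_Ico.mpr ⟨by omega, by omega⟩)
    simp

lemma eval_R_zero_high (p : ℕ) (hp : 2 ≤ p) {s : ℕ} (hs : s < p) :
    eval ((2*p-1+s : ℕ):ℝ) (Rp p) = 0 := by
  rw [Rp, eval_mul, eval_prod]
  apply mul_eq_zero_of_left
  apply prod_eq_zero (i := 2*p-1+s) (mem_Ico.mpr ⟨by omega, by omega⟩)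
  simp

lemma eval_R_neg (p : ℕ) (hp : 2 ≤ p) {j : ℕ} (hj1 : 1 ≤ j) (hjp : j ≤ p) :
    eval (-(j:ℝ)) (Rp p) = 0 := by
  rw [Rp, eval_mul, eval_prod, eval_prod]
  apply mul_eq_zero_of_right
  apply prod_eq_zero (i := p - j) (mem_range.mpr (by omega))
  have : ((p - j : ℕ) : ℝ) = (p : ℝ) - (j : ℝ) := by
    push_cast [Nat.cast_sub hjp]; ring
  simp only [eval_add, eval_X, eval_C, this]
  ring

lemma neg_prod (a b j : ℕ) :
    ∏ k ∈ Ico a b, (-(j:ℝ) - k) = (-1)^(b-a) * ((∏ k ∈ Ico a b, (j+k) : ℕ) : ℝ) := by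
  rw [Nat.cast_prod]
  calc ∏ k ∈ Ico a b, (-(j:ℝ) - k) = ∏ k ∈ Ico a b, ((-1) * (((j+k:ℕ)):ℝ)) :=
        prod_congr rfl (fun k _ => by push_cast; ring)
    _ = (-1)^(Ico a b).card * ∏ k ∈ Ico a b, (((j+k:ℕ)):ℝ) := by
        rw [prod_mul_distrib, prod_const]
    _ = _ := by rw [Nat.card_Ico]

lemma eval_T_neg (p i j : ℕ) (hp : 2 ≤ p) (hi : i ≤ 2*p) (hj1 : 1 ≤ j) :
    eval (-(j:ℝ)) (Tp p i) * (((2*p-2+j).factorial : ℝ))^2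
    = eval (i:ℝ) (Qp p j) * ((4*p-1-i).factorial : ℝ) * ((2*p+i-1).factorial : ℝ) := by
  have hQ : eval (i:ℝ) (Qp p j)
      = ((∏ r ∈ range (j-1), (4*p+r-i) : ℕ):ℝ) * ((∏ r ∈ range (j-1), (2*p+i+r) : ℕ):ℝ) := by
    rw [Qp, eval_mul, eval_prod, eval_prod, Nat.cast_prod, Nat.cast_prod]
    congr 1
    · refine prod_congr rfl (fun r _ => ?_)
      rw [eval_sub, eval_C, eval_X, ← Nat.cast_sub (by omega : i ≤ 4*p+r)]
    · refine prod_congr rfl (fun r _ => ?_)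
      rw [eval_add, eval_C, eval_X]
      push_cast
      ring
  have Wc : ((∏ k ∈ Ico (2*p-1) (4*p-1-i), (j+k) : ℕ):ℝ)
        * ((∏ k ∈ Ico (2*p-1) (2*p+i-1), (j+k) : ℕ):ℝ) * (((2*p-2+j).factorial:ℝ))^2
      = ((∏ r ∈ range (j-1), (4*p+r-i) : ℕ):ℝ) * ((∏ r ∈ range (j-1), (2*p+i+r):ℕ):ℝ)
        * ((4*p-1-i).factorial:ℝ) * ((2*p+i-1).factorial:ℝ) := by
    exact_mod_cast congrArg (Nat.cast : ℕ → ℝ) (Wnat p i j hp hi hj1)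
  have hsign : (-1:ℝ)^(4*p-1-i-(2*p-1)) * (-1:ℝ)^(2*p+i-1-(2*p-1)) = 1 := by
    rw [← pow_add]
    apply Even.neg_one_pow
    exact ⟨p, by omega⟩
  have hev : ∀ a b : ℕ, eval (-(j:ℝ)) (∏ k ∈ Ico a b, (X - C (k:ℝ)))
      = ∏ k ∈ Ico a b, (-(j:ℝ) - (k:ℝ)) := by
    intro a b
    rw [eval_prod]
    exact prod_congr rfl (fun k _ => by simp)
  rw [Tp, eval_mul, hev, hev, neg_prod, neg_prod, hQ]
  calc ((-1:ℝ)^(4*p-1-i-(2*p-1)) * _) * ((-1:ℝ)^(2*p+i-1-(2*p-1)) * _)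
        * (((2*p-2+j).factorial : ℝ))^2
      = ((-1:ℝ)^(4*p-1-i-(2*p-1)) * (-1:ℝ)^(2*p+i-1-(2*p-1)))
        * (((∏ k ∈ Ico (2*p-1) (4*p-1-i), (j+k) : ℕ):ℝ)
          * ((∏ k ∈ Ico (2*p-1) (2*p+i-1), (j+k) : ℕ):ℝ)
          * (((2*p-2+j).factorial:ℝ))^2) := by ring
    _ = _ := by rw [hsign, one_mul]; linear_combination Wc

lemma factorial_cast_ne (n : ℕ) : ((n.factorial : ℝ)) ≠ 0 :=
  (Nat.cast_pos.mpr n.factorial_pos).ne'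

lemma eval_Ep_high (p : ℕ) (hp : 2 ≤ p) {s : ℕ} (hs : s < p) :
    eval ((2*p-1+s : ℕ):ℝ) (Ep p) = 0 := by
  rw [Ep, eval_sub, eval_finset_sum, eval_mul, eval_C, eval_R_zero_high p hp hs, mul_zero,
    sub_zero]
  apply sum_eq_zero
  intro i hi
  rw [eval_mul, eval_C, eval_T_zero_high p hp hs (by simp at hi; omega), mul_zero]

lemma eval_Ep_neg (p : ℕ) (hp : 2 ≤ p) {j : ℕ} (hj1 : 1 ≤ j) (hjp : j ≤ p) :
    eval (-(j:ℝ)) (Ep p) = 0 := by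
  rw [Ep, eval_sub, eval_finset_sum, eval_mul, eval_C, eval_R_neg p hp hj1 hjp, mul_zero,
    sub_zero]
  have key : ∀ i ∈ range (2*p+1), eval (-(j:ℝ)) (C (coefT p i) * Tp p i)
      = ((-1:ℝ)^i * ((2*p).choose i : ℝ) * eval (i:ℝ) (Qp p j))
        / (((2*p-2+j).factorial : ℝ))^2 := by
    intro i hi
    have hi' : i ≤ 2*p := by simp at hi; omega
    have h := eval_T_neg p i j hp hi' hj1
    have hF := factorial_cast_ne (2*p-2+j)
    have hf1 := factorial_cast_ne (4*p-1-i)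
    have hf2 := factorial_cast_ne (2*p+i-1)
    rw [eval_mul, eval_C, coefT]
    field_simp
    linear_combination ((2*p).choose i : ℝ) * h
  rw [sum_congr rfl key, ← sum_div]
  have hdeg : (Qp p j).natDegree < 2*p := by
    rw [Qp]
    apply lt_of_le_of_lt (natDegree_mul_le)
    have b1 : (∏ r ∈ range (j-1), (C (((4*p+r:ℕ)):ℝ) - X)).natDegree ≤ j-1 := by
      apply le_trans (natDegree_prod_le _ _)
      apply le_trans (sum_le_card_nsmul _ _ 1 (fun r _ => by
        apply le_trans (natDegree_sub_le _ _)
        rw [natDegree_C, natDegree_X]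
        norm_num))
      simp
    have b2 : (∏ r ∈ range (j-1), (X + C (((2*p+r:ℕ)):ℝ))).natDegree ≤ j-1 := by
      apply le_trans (natDegree_prod_le _ _)
      apply le_trans (sum_le_card_nsmul _ _ 1 (fun r _ => by
        apply le_trans (natDegree_add_le _ _)
        rw [natDegree_C, natDegree_X]
        norm_num))
      simp
    omega
  rw [fd_sum (2*p) (Qp p j) hdeg, zero_div]

lemma natDeg_lin_prod (a b : ℕ) : (∏ k ∈ Ico a b, (X - C (k:ℝ))).natDegree ≤ b - a := by
  apply le_trans (natDegree_prod_le _ _)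
  apply le_trans (sum_le_card_nsmul _ _ 1 (fun k _ => by rw [natDegree_X_sub_C]))
  simp

lemma natDeg_Ep (p : ℕ) (hp : 2 ≤ p) : (Ep p).natDegree ≤ 2*p := by
  rw [Ep]
  apply le_trans (natDegree_sub_le _ _)
  apply max_le
  · apply natDegree_sum_le_of_forall_le
    intro i hi
    have hi' : i ≤ 2*p := by simp at hi; omega
    have hT : (Tp p i).natDegree ≤ 2*p := by
      rw [Tp]
      refine le_trans natDegree_mul_le ?_
      have h1 := natDeg_lin_prod (2*p-1) (4*p-1-i)
      have h2 := natDeg_lin_prod (2*p-1) (2*p+i-1)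
      omega
    refine le_trans natDegree_mul_le ?_
    rw [natDegree_C]
    omega
  · have hR : (Rp p).natDegree ≤ 2*p := by
      rw [Rp]
      refine le_trans natDegree_mul_le ?_
      have h1 := natDeg_lin_prod (2*p-1) (3*p-1)
      have h2 : (∏ k ∈ range p, (X + C ((p:ℝ) - k))).natDegree ≤ p := by
        apply le_trans (natDegree_prod_le _ _)
        apply le_trans (sum_le_card_nsmul _ _ 1 (fun k _ => by
          apply le_trans (natDegree_add_le _ _)
          rw [natDegree_C, natDegree_X]
          norm_num))
        simp
      omega
    refine le_trans natDegree_mul_le ?_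
    rw [natDegree_C]
    omega

lemma natU (p : ℕ) (hp : 2 ≤ p) : ∏ k ∈ Ico (2*p-1) (3*p-1), (3*p-1-k) = p.factorial := by
  rw [prod_Ico_eq_prod_range]
  have h : 3*p-1 - (2*p-1) = p := by omega
  rw [h]
  calc ∏ r ∈ range p, (3*p-1-(2*p-1+r)) = ∏ r ∈ range p, ((p-1-r)+1) := by
        refine prod_congr rfl (fun r hr => ?_)
        have : r < p := mem_range.mp hr
        omega
    _ = ∏ r ∈ range p, (r+1) := prod_range_reflect (fun j => j+1) p
    _ = p.factorial := prod_range_add_one_eq_factorial p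

lemma natV (p : ℕ) (hp : 2 ≤ p) :
    (∏ k ∈ range p, (4*p-1-k)) * (3*p-1).factorial = (4*p-1).factorial := by
  have h1 : ∏ k ∈ range p, (4*p-1-k) = ∏ k ∈ range p, (3*p+k) := by
    calc ∏ k ∈ range p, (4*p-1-k) = ∏ k ∈ range p, ((fun j => 3*p+j) (p-1-k)) := by
          refine prod_congr rfl (fun k hk => ?_)
          have : k < p := mem_range.mp hk
          simp only
          omega
      _ = ∏ k ∈ range p, (3*p+k) := prod_range_reflect (fun j => 3*p+j) p
  have h2 : ∏ m ∈ Ico (3*p) (4*p), m = ∏ k ∈ range p, (3*p+k) := by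
    rw [prod_Ico_eq_prod_range]
    have : 4*p - 3*p = p := by omega
    rw [this]
  have h3 := prod_Ico_mul_factorial (3*p-1) (4*p-1) (by omega)
  have e1 : 3*p-1+1 = 3*p := by omega
  have e2 : 4*p-1+1 = 4*p := by omega
  rw [e1, e2] at h3
  rw [h1, ← h2, h3]

lemma eval_Ep_mid (p : ℕ) (hp : 2 ≤ p) : eval ((3*p-1 : ℕ):ℝ) (Ep p) = 0 := by
  have hU : eval ((3*p-1:ℕ):ℝ) (∏ k ∈ Ico (2*p-1) (3*p-1), (X - C (k:ℝ)))
      = (p.factorial : ℝ) := by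
    rw [eval_prod]
    calc ∏ k ∈ Ico (2*p-1) (3*p-1), eval ((3*p-1:ℕ):ℝ) (X - C (k:ℝ))
        = ∏ k ∈ Ico (2*p-1) (3*p-1), (((3*p-1-k : ℕ)):ℝ) := by
          refine prod_congr rfl (fun k hk => ?_)
          have hk' : k ≤ 3*p-1 := by have := (mem_Ico.mp hk).2; omega
          rw [eval_sub, eval_X, eval_C, ← Nat.cast_sub hk']
      _ = ((∏ k ∈ Ico (2*p-1) (3*p-1), (3*p-1-k) : ℕ) : ℝ) := (Nat.cast_prod _ _).symm
      _ = (p.factorial : ℝ) := by rw [natU p hp]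
  have hV : eval ((3*p-1:ℕ):ℝ) (∏ k ∈ range p, (X + C ((p:ℝ) - k)))
      = ((∏ k ∈ range p, (4*p-1-k) : ℕ) : ℝ) := by
    rw [eval_prod, Nat.cast_prod]
    refine prod_congr rfl (fun k hk => ?_)
    have hk' : k < p := mem_range.mp hk
    rw [eval_add, eval_X, eval_C]
    have e : (4*p-1-k : ℕ) = (3*p-1) + (p - k) := by omega
    rw [e]
    push_cast [Nat.cast_sub (le_of_lt hk')]
    ring
  have hzero : ∀ i ∈ range (2*p+1), i ≠ p →
      eval ((3*p-1:ℕ):ℝ) (C (coefT p i) * Tp p i) = 0 := by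
    intro i hi hne
    have hi' : i ≤ 2*p := by simp at hi; omega
    rw [eval_mul, eval_C, Tp, eval_mul, eval_prod, eval_prod]
    rcases Nat.lt_or_ge i p with h | h
    · refine mul_eq_zero_of_right _ (mul_eq_zero_of_left ?_ _)
      apply prod_eq_zero (i := 3*p-1) (mem_Ico.mpr ⟨by omega, by omega⟩)
      simp
    · have h' : p < i := by omega
      refine mul_eq_zero_of_right _ (mul_eq_zero_of_right _ ?_)
      apply prod_eq_zero (i := 3*p-1) (mem_Ico.mpr ⟨by omega, by omega⟩)
      simp
  rw [Ep, eval_sub, eval_finset_sum, sub_eq_zero,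
    sum_eq_single_of_mem p (mem_range.mpr (by omega)) hzero]
  have e1 : 4*p-1-p = 3*p-1 := by omega
  have e2 : 2*p+p-1 = 3*p-1 := by omega
  rw [eval_mul, eval_C, eval_mul, eval_C, Tp, Rp, e1, e2, eval_mul, eval_mul, hU, hV]
  rw [coefT, coefR, e1, e2]
  have hCh : (((4*p-1).choose p : ℕ) : ℝ) * (p.factorial : ℝ) * ((3*p-1).factorial : ℝ)
      = ((4*p-1).factorial : ℝ) := by
    have h := Nat.choose_mul_factorial_mul_factorial (show p ≤ 4*p-1 by omega)
    rw [show 4*p-1-p = 3*p-1 by omega] at h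
    exact_mod_cast congrArg (Nat.cast : ℕ → ℝ) h
  have hVf : ((∏ k ∈ range p, (4*p-1-k) : ℕ) : ℝ) * ((3*p-1).factorial : ℝ)
      = ((4*p-1).factorial : ℝ) := by
    exact_mod_cast congrArg (Nat.cast : ℕ → ℝ) (natV p hp)
  have hF3 := factorial_cast_ne (3*p-1)
  have hChne : (((4*p-1).choose p : ℕ) : ℝ) ≠ 0 :=
    Nat.cast_ne_zero.mpr (Nat.choose_pos (show p ≤ 4*p-1 by omega)).ne'
  have hVv : ((∏ k ∈ range p, (4*p-1-k) : ℕ) : ℝ)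
      = (((4*p-1).choose p : ℕ) : ℝ) * (p.factorial : ℝ) :=
    mul_right_cancel₀ hF3 (by rw [hVf, ← hCh])
  rw [hVv]
  field_simp

lemma Ep_zero (p : ℕ) (hp : 2 ≤ p) : Ep p = 0 := by
  set S : Finset ℝ := ((range (p+1)).image (fun s : ℕ => ((2*p-1+s : ℕ):ℝ)))
      ∪ ((Icc 1 p).image (fun j : ℕ => -(j:ℝ))) with hS
  have hcard : 2*p+1 ≤ S.card := by
    have hinj1 : Set.InjOn (fun s : ℕ => ((2*p-1+s : ℕ):ℝ)) (range (p+1)) := by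
      intro a _ b _ h
      simp only [Nat.cast_inj] at h
      omega
    have hinj2 : Set.InjOn (fun j : ℕ => -(j:ℝ)) (Icc 1 p) := by
      intro a _ b _ h
      simp only [neg_inj, Nat.cast_inj] at h
      exact h
    have hdisj : Disjoint ((range (p+1)).image (fun s : ℕ => ((2*p-1+s : ℕ):ℝ)))
        ((Icc 1 p).image (fun j : ℕ => -(j:ℝ))) := by
      rw [disjoint_left]
      intro x hx1 hx2
      obtain ⟨s, _, rfl⟩ := mem_image.mp hx1
      obtain ⟨j, hj, heq⟩ := mem_image.mp hx2
      have hj1 : 1 ≤ j := (mem_Icc.mp hj).1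
      have h1 : (0:ℝ) ≤ ((2*p-1+s : ℕ):ℝ) := Nat.cast_nonneg _
      have h2 : (1:ℝ) ≤ (j:ℝ) := by exact_mod_cast hj1
      rw [← heq] at h1
      linarith
    rw [hS, card_union_of_disjoint hdisj, card_image_of_injOn hinj1,
      card_image_of_injOn hinj2, card_range, Nat.card_Icc]
    omega
  apply eq_zero_of_natDegree_lt_card_of_eval_eq_zero' (Ep p) S
  · intro x hx
    rw [hS, mem_union] at hx
    rcases hx with hx | hx
    · obtain ⟨s, hs, rfl⟩ := mem_image.mp hx
      have hs' : s < p + 1 := mem_range.mp hs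
      rcases Nat.lt_or_ge s p with h | h
      · exact eval_Ep_high p hp h
      · have e : 2*p-1+s = 3*p-1 := by omega
        rw [e]
        exact eval_Ep_mid p hp
    · obtain ⟨j, hj, rfl⟩ := mem_image.mp hx
      exact eval_Ep_neg p hp (mem_Icc.mp hj).1 (mem_Icc.mp hj).2
  · calc (Ep p).natDegree ≤ 2*p := natDeg_Ep p hp
      _ < 2*p+1 := by omega
      _ ≤ S.card := hcard

noncomputable def binom (x : ℝ) (n : ℕ) : ℝ :=
  (∏ k ∈ Finset.range n, (x - k)) / (Nat.factorial n : ℝ)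

theorem stmt_0 (p : ℕ) (hp : 2 ≤ p) (t : ℝ) :
    ∑ i ∈ Finset.range (2*p + 1), (-1 : ℝ)^i * (Nat.choose (2*p) i : ℝ) *
        binom t (4*p - 1 - i) * binom t (2*p + i - 1) =
      ((-1 : ℝ)^p * (Nat.choose (2*p) p : ℝ) / (Nat.choose (4*p - 1) p : ℝ)) *
        binom t (3*p - 1) * binom (t + p) (3*p - 1) := by
  have hsplit : ∀ n : ℕ, 2*p-1 ≤ n → binom t n
      = eval t (Pp p) * eval t (∏ k ∈ Ico (2*p-1) n, (X - C (k:ℝ))) / (n.factorial : ℝ) := by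
    intro n hn
    rw [binom, Pp, eval_prod, eval_prod]
    congr 1
    rw [← prod_range_mul_prod_Ico (fun k => t - (k:ℝ)) hn]
    congr 1
    · exact prod_congr rfl (fun k _ => by simp)
    · exact prod_congr rfl (fun k _ => by simp)
  have hE : ∑ i ∈ range (2*p+1), C (coefT p i) * Tp p i = C (coefR p) * Rp p := by
    have h := Ep_zero p hp
    rw [Ep, sub_eq_zero] at h
    exact h
  have hEt : ∑ i ∈ range (2*p+1), coefT p i * eval t (Tp p i) = coefR p * eval t (Rp p) := by
    have h := congrArg (eval t) hE
    rw [eval_finset_sum, eval_mul, eval_C] at h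
    rw [← h]
    exact sum_congr rfl (fun i _ => by rw [eval_mul, eval_C])
  have hterm : ∀ i ∈ range (2*p+1), (-1 : ℝ)^i * (Nat.choose (2*p) i : ℝ) *
        binom t (4*p - 1 - i) * binom t (2*p + i - 1)
      = (eval t (Pp p))^2 * (coefT p i * eval t (Tp p i)) := by
    intro i hi
    have hi' : i ≤ 2*p := by simp at hi; omega
    rw [hsplit (4*p-1-i) (by omega), hsplit (2*p+i-1) (by omega), Tp, eval_mul, coefT]
    have hf1 := factorial_cast_ne (4*p-1-i)
    have hf2 := factorial_cast_ne (2*p+i-1)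
    field_simp
  rw [sum_congr rfl hterm, ← mul_sum, hEt]
  -- RHS computation
  have hb1 : binom t (3*p-1)
      = eval t (Pp p) * eval t (∏ k ∈ Ico (2*p-1) (3*p-1), (X - C (k:ℝ)))
        / ((3*p-1).factorial : ℝ) := hsplit (3*p-1) (by omega)
  have hb2 : binom (t + p) (3*p-1)
      = eval t (Pp p) * eval t (∏ k ∈ range p, (X + C ((p:ℝ) - k)))
        / ((3*p-1).factorial : ℝ) := by
    rw [binom]
    congr 1
    rw [← prod_range_mul_prod_Ico (fun k => (t + (p:ℝ)) - (k:ℝ)) (show p ≤ 3*p-1 by omega)]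
    rw [mul_comm]
    congr 1
    · rw [Pp, eval_prod, prod_Ico_eq_prod_range]
      have e : 3*p-1-p = 2*p-1 := by omega
      rw [e]
      refine prod_congr rfl (fun r _ => ?_)
      rw [eval_sub, eval_X, eval_C]
      push_cast
      ring
    · rw [eval_prod]
      refine prod_congr rfl (fun k _ => ?_)
      rw [eval_add, eval_X, eval_C]
      ring
  rw [hb1, hb2, coefR, Rp, eval_mul]
  have hF3 := factorial_cast_ne (3*p-1)
  field_simp
end

section
/- Let p ≥ 2 be an integer and define Φ̃_p(t) = Σ_{i=0}^{2p} (−1)^i C(2p,i) · binom(t, 4p−1−i) · binom(t, 2p+i−1) for t ∈ ℝ. Then Φ̃_p(3p−1) = (−1)^p · C(2p,p). -/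
/-- `Φ̃_p(t) = Σ_{i=0}^{2p} (−1)^i C(2p,i) binom(t,4p−1−i) binom(t,2p+i−1)`. -/
noncomputable def Phi (p : ℕ) (t : ℝ) : ℝ :=
  ∑ i ∈ Finset.range (2*p + 1), (-1 : ℝ)^i * (Nat.choose (2*p) i : ℝ) *
    binom t (4*p - 1 - i) * binom t (2*p + i - 1)

lemma binom_nat_eq_zero (m n : ℕ) (h : m < n) : binom (m : ℝ) n = 0 := by
  unfold binom
  rw [Finset.prod_eq_zero (Finset.mem_range.mpr h) (by simp)]
  simp

lemma prod_nat_self (m : ℕ) : (∏ k ∈ Finset.range m, ((m : ℝ) - k)) = (Nat.factorial m : ℝ) := by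
  induction m with
  | zero => simp
  | succ n ih =>
    rw [Finset.prod_range_succ']
    push_cast
    have : ∀ k ∈ Finset.range n, ((n : ℝ) + 1 - ((k : ℝ) + 1)) = (n : ℝ) - k := by
      intro k _; ring
    rw [Finset.prod_congr rfl this, ih]
    push_cast [Nat.factorial_succ]
    ring

lemma binom_nat_self (m : ℕ) : binom (m : ℝ) m = 1 := by
  unfold binom
  rw [prod_nat_self]
  exact div_self (by exact_mod_cast Nat.factorial_ne_zero m)

theorem stmt_1 (p : ℕ) (hp : 2 ≤ p) :
    Phi p (3*(p : ℝ) - 1) = (-1 : ℝ)^p * (Nat.choose (2*p) p : ℝ) := by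
  have hcast : (3*(p : ℝ) - 1) = ((3*p - 1 : ℕ) : ℝ) := by
    rw [Nat.cast_sub (by omega)]; push_cast; ring
  unfold Phi
  rw [hcast]
  rw [Finset.sum_eq_single_of_mem p (by simp [Finset.mem_range]; omega)]
  · have h1 : 4*p - 1 - p = 3*p - 1 := by omega
    have h2 : 2*p + p - 1 = 3*p - 1 := by omega
    rw [h1, h2, binom_nat_self]
    ring
  · intro i hi hne
    rw [Finset.mem_range] at hi
    rcases lt_or_gt_of_ne hne with h | h
    · rw [binom_nat_eq_zero _ _ (by omega : 3*p - 1 < 4*p - 1 - i)]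
      ring
    · rw [binom_nat_eq_zero _ _ (by omega : 3*p - 1 < 2*p + i - 1)]
      ring
end

section
/- Let p ≥ 2 be an integer and define Φ̃_p(t) = Σ_{i=0}^{2p} (−1)^i C(2p,i) · binom(t, 4p−1−i) · binom(t, 2p+i−1) for t ∈ ℝ. Then for every real number t one has the recursion (t+1)(p+t+1) · Φ̃_p(t) = (2p−t−2)(3p−t−2) · Φ̃_p(t+1). -/
lemma binom_succ (t : ℝ) (n : ℕ) :
    ((n : ℝ) + 1) * binom t (n + 1) = (t - n) * binom t n := by
  unfold binom
  rw [Finset.prod_range_succ, Nat.factorial_succ]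
  have h1 : ((n : ℝ) + 1) ≠ 0 := by positivity
  have h2 : ((n.factorial : ℝ)) ≠ 0 := by positivity
  push_cast
  field_simp

lemma binom_shift (t : ℝ) (n : ℕ) :
    ((n : ℝ) + 1) * binom (t + 1) (n + 1) = (t + 1) * binom t n := by
  unfold binom
  rw [Finset.prod_range_succ', Nat.factorial_succ]
  have h1 : ((n : ℝ) + 1) ≠ 0 := by positivity
  have h2 : ((n.factorial : ℝ)) ≠ 0 := by positivity
  have hprod : ∀ k ∈ Finset.range n, (t + 1 - ((k : ℝ) + 1)) = t - k := by
    intro k _; push_cast; ring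
  rw [Finset.prod_congr rfl (by intro k hk; push_cast; ring :
    ∀ k ∈ Finset.range n, (t + 1 - (((k : ℕ) + 1 : ℕ) : ℝ)) = t - (k : ℝ))]
  push_cast
  field_simp
  ring

set_option maxHeartbeats 2000000 in
theorem stmt_2 (p : ℕ) (hp : 2 ≤ p) (t : ℝ) :
    (t + 1) * ((p : ℝ) + t + 1) * Phi p t =
      (2*(p : ℝ) - t - 2) * (3*(p : ℝ) - t - 2) * Phi p (t + 1) := by
  set g : ℕ → ℝ := fun i => (t + 1) / 2 * i * (-1 : ℝ)^i * (Nat.choose (2*p) i : ℝ) *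
      binom t (4*p - 1 - i) * binom t (2*p + i - 2) with hg
  have key : ∀ i ∈ Finset.range (2*p + 1),
      (t + 1) * ((p : ℝ) + t + 1) *
        ((-1 : ℝ)^i * (Nat.choose (2*p) i : ℝ) * binom t (4*p - 1 - i) * binom t (2*p + i - 1))
      - (2*(p : ℝ) - t - 2) * (3*(p : ℝ) - t - 2) *
        ((-1 : ℝ)^i * (Nat.choose (2*p) i : ℝ) * binom (t+1) (4*p - 1 - i) *
          binom (t+1) (2*p + i - 1))
      = g (i + 1) - g i := by
    intro i hi
    simp only [Finset.mem_range] at hi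
    have hi' : i ≤ 2*p := by omega
    -- abbreviations
    set a : ℕ := 4*p - 2 - i with ha
    set b : ℕ := 2*p + i - 2 with hb
    have haa : 4*p - 1 - i = a + 1 := by omega
    have hbb : 2*p + i - 1 = b + 1 := by omega
    have haa' : 4*p - 1 - (i + 1) = a := by omega
    have hbb' : 2*p + (i + 1) - 2 = b + 1 := by omega
    -- cast facts
    have hca : ((a : ℕ) : ℝ) = 4*(p : ℝ) - 2 - (i : ℝ) := by
      have h : a + (2 + i) = 4*p := by omega
      have := congrArg (fun n : ℕ => (n : ℝ)) h
      push_cast at this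
      linarith
    have hcb : ((b : ℕ) : ℝ) = 2*(p : ℝ) + (i : ℝ) - 2 := by
      have h : b + 2 = 2*p + i := by omega
      have := congrArg (fun n : ℕ => (n : ℝ)) h
      push_cast at this
      linarith
    have hane : ((a : ℕ) : ℝ) + 1 ≠ 0 := by positivity
    have hbne : ((b : ℕ) : ℝ) + 1 ≠ 0 := by positivity
    have hine : ((i : ℕ) : ℝ) + 1 ≠ 0 := by positivity
    -- binomial relations in division form
    have d1 : binom t (a + 1) = (t - a) * binom t a / ((a : ℝ) + 1) := by
      rw [eq_div_iff hane]; linear_combination binom_succ t a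
    have d2 : binom t (b + 1) = (t - b) * binom t b / ((b : ℝ) + 1) := by
      rw [eq_div_iff hbne]; linear_combination binom_succ t b
    have d3 : binom (t+1) (a + 1) = (t + 1) * binom t a / ((a : ℝ) + 1) := by
      rw [eq_div_iff hane]; linear_combination binom_shift t a
    have d4 : binom (t+1) (b + 1) = (t + 1) * binom t b / ((b : ℝ) + 1) := by
      rw [eq_div_iff hbne]; linear_combination binom_shift t b
    -- choose relation
    have hc : ((Nat.choose (2*p) (i+1)) : ℝ) =
        ((Nat.choose (2*p) i) : ℝ) * (2*(p : ℝ) - i) / ((i : ℝ) + 1) := by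
      rw [eq_div_iff hine]
      have h := Nat.choose_succ_right_eq (2*p) i
      have := congrArg (fun n : ℕ => (n : ℝ)) h
      push_cast [Nat.cast_sub hi'] at this
      linarith
    simp only [hg, haa, hbb, haa', hbb', pow_succ, ← hb, Nat.cast_add, Nat.cast_one]
    rw [d1, d2, d3, d4, hc]
    field_simp
    rw [hca, hcb]
    ring
  have main : (t + 1) * ((p : ℝ) + t + 1) * Phi p t
      - (2*(p : ℝ) - t - 2) * (3*(p : ℝ) - t - 2) * Phi p (t + 1)
      = g (2*p + 1) - g 0 := by
    unfold Phi
    rw [Finset.mul_sum, Finset.mul_sum, ← Finset.sum_sub_distrib,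
      Finset.sum_congr rfl key, Finset.sum_range_sub g (2*p + 1)]
  have hg0 : g 0 = 0 := by simp [hg]
  have hgtop : g (2*p + 1) = 0 := by
    simp [hg, Nat.choose_eq_zero_of_lt (Nat.lt_succ_self (2*p))]
  rw [hg0, hgtop] at main
  linarith
end

section
/- Let p ≥ 2 be an integer, let h_{i,1} = ((i−p)² − (p−1)²)/(4p) for integers i, and set B_p = (−1)^p · C(2p,p) · (4p)^{3p−1} / ( C(4p−1,p) · ((3p−1)!)² ). Then for every real number t one has Σ_{i=0}^{2p} (−1)^i C(2p,i) · binom(t, 4p−1−i) · binom(t, 2p+i−1) = B_p · Π_{i=1}^{3p−1} ( (t² − 2t(p−1))/(4p) − h_{i,1} ). -/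
/-- The conformal weight `h_{i,1} = ((i−p)² − (p−1)²)/(4p)`. -/
noncomputable def hwt (p i : ℕ) : ℝ :=
  (((i : ℝ) - p)^2 - ((p : ℝ) - 1)^2) / (4*p)

open Finset

lemma binom_succ_mul (t : ℝ) (s : ℕ) : binom t (s+1) * ((s:ℝ)+1) = binom t s * (t - s) := by
  have h : (Nat.factorial s : ℝ) ≠ 0 := Nat.cast_ne_zero.2 (Nat.factorial_ne_zero s)
  have h2 : ((s:ℝ)+1) ≠ 0 := by positivity
  simp only [binom, prod_range_succ, Nat.factorial_succ]
  push_cast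
  field_simp

lemma choose_real_succ (N j : ℕ) :
    ((j:ℝ)+1) * (Nat.choose N (j+1) : ℝ) = ((N:ℝ) - j) * (Nat.choose N j : ℝ) := by
  by_cases h : j ≤ N
  · have := Nat.choose_succ_right_eq N j
    have hc : ((Nat.choose N (j+1) * (j+1) : ℕ) : ℝ) = ((Nat.choose N j * (N - j) : ℕ) : ℝ) := by
      exact_mod_cast congrArg (Nat.cast (R := ℝ)) this
    push_cast [Nat.cast_sub h] at hc
    linarith [hc]
  · push_neg at h
    rw [Nat.choose_eq_zero_of_lt h, Nat.choose_eq_zero_of_lt (by omega)]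
    ring

noncomputable def Fterm (n m : ℕ) (t : ℝ) (j : ℕ) : ℝ :=
  (-1)^j * (Nat.choose (2*n) j : ℝ) * binom t (m + n - j) * binom t (m - n + j)

noncomputable def Gterm (n m : ℕ) (t : ℝ) (j : ℕ) : ℝ :=
  (-(1:ℝ)/2) * j * ((m:ℝ) - n + j) * (t - m - n + j) * Fterm n m t j

lemma step (n m : ℕ) (hnm : n < m) (t : ℝ) (j : ℕ) (hj : j ≤ 2*n) :
    ((n:ℝ)*m*(t-m) + ((j:ℝ)-n)^2*(t+n)) * Fterm n m t j
      = Gterm n m t (j+1) - Gterm n m t j := by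
  -- index bookkeeping
  have hjmn : j + 1 ≤ m + n := by omega
  have e1 : m + n - j = (m + n - j - 1) + 1 := by omega
  have e2 : m + n - (j+1) = m + n - j - 1 := by omega
  have e3 : m - n + (j+1) = (m - n + j) + 1 := by omega
  set a : ℕ := m + n - j - 1 with ha
  set b : ℕ := m - n + j with hb
  have hca : ((a:ℕ):ℝ) = (m:ℝ) + n - j - 1 := by
    have h' : a + (j + 1) = m + n := by omega
    have := congrArg (Nat.cast (R := ℝ)) h'
    push_cast at this
    linarith
  have hcb : ((b:ℕ):ℝ) = (m:ℝ) - n + j := by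
    have h' : b + n = m + j := by omega
    have := congrArg (Nat.cast (R := ℝ)) h'
    push_cast at this
    linarith
  have h1 := binom_succ_mul t a
  have h2 := binom_succ_mul t b
  have h3 := choose_real_succ (2*n) j
  rw [hca] at h1
  rw [hcb] at h2
  simp only [Fterm, Gterm, e1, e2, e3]
  push_cast
  rw [← hb]
  set C := (Nat.choose (2*n) j : ℝ)
  set C' := (Nat.choose (2*n) (j+1) : ℝ)
  set X := binom t (a+1)
  set Z := binom t a
  set Y := binom t b
  set W := binom t (b+1)
  -- key : (j+1)(b+1)(t-a) C' Z W = (2n-j)(a+1)(t-b) C X Y, with a,b replaced by real exprs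
  have key : ((j:ℝ)+1) * (((m:ℝ)-n+j)+1) * (t - ((m:ℝ)+n-j-1)) * (C' * Z * W)
      = (2*(n:ℝ)-j) * (((m:ℝ)+n-j-1)+1) * (t - ((m:ℝ)-n+j)) * (C * X * Y) := by
    have hZ : Z * (t - ((m:ℝ)+n-j-1)) = X * (((m:ℝ)+n-j-1)+1) := by linarith [h1]
    have hW : W * ((((m:ℝ)-n+j))+1) = Y * (t - ((m:ℝ)-n+j)) := by linarith [h2]
    calc ((j:ℝ)+1) * (((m:ℝ)-n+j)+1) * (t - ((m:ℝ)+n-j-1)) * (C' * Z * W)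
        = (((j:ℝ)+1) * C') * (Z * (t - ((m:ℝ)+n-j-1))) * (W * ((((m:ℝ)-n+j))+1)) := by ring
      _ = ((2*(n:ℝ)-j) * C) * (X * (((m:ℝ)+n-j-1)+1)) * (Y * (t - ((m:ℝ)-n+j))) := by
          rw [hZ, hW]; rw [show ((j:ℝ)+1) * C' = (2*(n:ℝ)-j) * C by exact_mod_cast h3]
      _ = (2*(n:ℝ)-j) * (((m:ℝ)+n-j-1)+1) * (t - ((m:ℝ)-n+j)) * (C * X * Y) := by ring
  linear_combination (-(1:ℝ)/2) * (-1)^j * key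

noncomputable def fsum (n m : ℕ) (t : ℝ) : ℝ := ∑ j ∈ range (2*n+1), Fterm n m t j


-- telescoping: sum of P_j F_j = 0
lemma sumPF (n m : ℕ) (hnm : n < m) (t : ℝ) :
    ∑ j ∈ range (2*n+1), ((n:ℝ)*m*(t-m) + ((j:ℝ)-n)^2*(t+n)) * Fterm n m t j = 0 := by
  have h : ∀ j ∈ range (2*n+1),
      ((n:ℝ)*m*(t-m) + ((j:ℝ)-n)^2*(t+n)) * Fterm n m t j
        = Gterm n m t (j+1) - Gterm n m t j := by
    intro j hj
    exact step n m hnm t j (by simpa using Nat.lt_succ_iff.mp (mem_range.mp hj))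
  rw [Finset.sum_congr rfl h, Finset.sum_range_sub (Gterm n m t)]
  have hG0 : Gterm n m t 0 = 0 := by simp [Gterm]
  have hGtop : Gterm n m t (2*n+1) = 0 := by
    have : Nat.choose (2*n) (2*n+1) = 0 := Nat.choose_eq_zero_of_lt (by omega)
    simp [Gterm, Fterm, this]
  rw [hG0, hGtop]; ring

-- reindex: ∑ j(2n-j) F n j = -2n(2n-1) fsum (n-1)
lemma sum_reindex (n m : ℕ) (hn : 1 ≤ n) (hnm : n < m) (t : ℝ) :
    ∑ j ∈ range (2*n+1), ((j:ℝ)*(2*(n:ℝ)-j)) * Fterm n m t j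
      = -(2*(n:ℝ)*(2*(n:ℝ)-1)) * fsum (n-1) m t := by
  rw [Finset.sum_range_succ']
  simp only [Nat.cast_zero, zero_mul, mul_zero, add_zero]
  have hterm : ∀ j, j < 2*n → (((j:ℝ)+1)*(2*(n:ℝ)-(j+1))) * Fterm n m t (j+1)
      = -(2*(n:ℝ)*(2*(n:ℝ)-1)) * Fterm (n-1) m t j := by
    intro j hj
    have hc : ((j:ℕ)+1) * (2*n - 1 - j) * Nat.choose (2*n) (j+1)
        = 2*n*(2*n-1) * Nat.choose (2*n-2) j := by
      have h1 : 2*n * Nat.choose (2*n-1) j = Nat.choose (2*n) (j+1) * (j+1) := by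
        have := Nat.add_one_mul_choose_eq (2*n-1) j
        rwa [show 2*n-1+1 = 2*n by omega] at this
      have h2 : Nat.choose (2*n-2) j * (2*n-1) = Nat.choose (2*n-1) j * (2*n-1-j) := by
        have := Nat.choose_mul_succ_eq (2*n-2) j
        rwa [show 2*n-2+1 = 2*n-1 by omega] at this
      calc ((j:ℕ)+1) * (2*n - 1 - j) * Nat.choose (2*n) (j+1)
          = (2*n-1-j) * (Nat.choose (2*n) (j+1) * (j+1)) := by ring
        _ = (2*n-1-j) * (2*n * Nat.choose (2*n-1) j) := by rw [h1]
        _ = 2*n * (Nat.choose (2*n-1) j * (2*n-1-j)) := by ring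
        _ = 2*n * (Nat.choose (2*n-2) j * (2*n-1)) := by rw [h2]
        _ = 2*n*(2*n-1) * Nat.choose (2*n-2) j := by ring
    have hcr : ((j:ℝ)+1) * (2*(n:ℝ)-1-j) * (Nat.choose (2*n) (j+1) : ℝ)
        = 2*(n:ℝ)*(2*(n:ℝ)-1) * (Nat.choose (2*n-2) j : ℝ) := by
      have := congrArg (Nat.cast (R := ℝ)) hc
      push_cast [Nat.cast_sub (by omega : j ≤ 2*n-1), Nat.cast_sub (by omega : 1 ≤ 2*n),
        Nat.cast_sub (by omega : 2 ≤ 2*n)] at this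
      convert this using 2 <;> push_cast [Nat.cast_sub (by omega : 1 ≤ 2*n),
        Nat.cast_sub (by omega : 2 ≤ 2*n)] <;> ring
    have e1 : m + n - (j+1) = m + (n-1) - j := by omega
    have e2 : m - n + (j+1) = m - (n-1) + j := by omega
    have e3 : 2*(n-1) = 2*n-2 := by omega
    simp only [Fterm, e1, e2, e3, pow_succ]
    linear_combination (-(-1:ℝ)^j * binom t (m + (n-1) - j) * binom t (m - (n-1) + j)) * hcr
  have hsum : ∀ j ∈ range (2*n), (((j:ℕ)+1:ℕ):ℝ)*(2*(n:ℝ)-((j:ℕ)+1:ℕ)) * Fterm n m t (j+1)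
      = -(2*(n:ℝ)*(2*(n:ℝ)-1)) * Fterm (n-1) m t j := by
    intro j hj
    have := hterm j (mem_range.mp hj)
    push_cast
    push_cast at this
    linarith [this]
  rw [Finset.sum_congr rfl hsum, ← Finset.mul_sum]
  congr 1
  rw [show 2*n = (2*n-1)+1 by omega, Finset.sum_range_succ]
  have hz : Fterm (n-1) m t (2*n-1) = 0 := by
    have hcz : Nat.choose (2*(n-1)) (2*n-1) = 0 := Nat.choose_eq_zero_of_lt (by omega)
    simp [Fterm, hcz]
  rw [hz, add_zero, fsum, show 2*(n-1)+1 = 2*n-1 by omega]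

lemma recur (n m : ℕ) (hn : 1 ≤ n) (hnm : n < m) (t : ℝ) :
    ((m:ℝ)+n)*(t+n-m) * fsum n m t = -(2*(2*(n:ℝ)-1)*(t+n)) * fsum (n-1) m t := by
  have h1 := sumPF n m hnm t
  have h2 := sum_reindex n m hn hnm t
  have h3 : ∑ j ∈ range (2*n+1), ((n:ℝ)*m*(t-m) + ((j:ℝ)-n)^2*(t+n)) * Fterm n m t j
      = ((n:ℝ)*m*(t-m) + (n:ℝ)^2*(t+n)) * fsum n m t
        - (t+n) * ∑ j ∈ range (2*n+1), ((j:ℝ)*(2*(n:ℝ)-j)) * Fterm n m t j := by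
    rw [fsum, Finset.mul_sum, Finset.mul_sum, ← Finset.sum_sub_distrib]
    exact Finset.sum_congr rfl (fun j _ => by ring)
  rw [h3, h2] at h1
  have hn0 : (n:ℝ) ≠ 0 := by
    have : 0 < n := hn
    positivity
  have key : (n:ℝ) * (((m:ℝ)+n)*(t+n-m) * fsum n m t)
      = (n:ℝ) * (-(2*(2*(n:ℝ)-1)*(t+n)) * fsum (n-1) m t) := by linear_combination h1
  exact mul_left_cancel₀ hn0 key

lemma closed (n m : ℕ) (hnm : n < m) (t : ℝ) :
    (∏ j ∈ range n, (((m:ℝ)+j+1)*(t+j+1-m))) * fsum n m t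
      = (-1)^n * (∏ j ∈ range n, (2*(2*(j:ℝ)+1)*(t+j+1))) * (binom t m)^2 := by
  induction n with
  | zero =>
    simp [fsum, Fterm]
    ring
  | succ k ih =>
    have hk : k < m := by omega
    have ihk := ih hk
    have recv := recur (k+1) m (by omega) hnm t
    simp only [Nat.add_sub_cancel] at recv
    rw [prod_range_succ, prod_range_succ]
    push_cast at recv ⊢
    linear_combination (∏ j ∈ range k, (((m:ℝ)+j+1)*(t+j+1-m))) * recv
      + (-(2*(2*(k:ℝ)+1)*(t+(k:ℝ)+1))) * ihk

-- scalar identity in ℕ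
lemma scalar_nat (n m : ℕ) :
    (∏ j ∈ range n, (m+j+1)) * Nat.choose (2*n) n
      = (∏ j ∈ range n, (2*(2*j+1))) * Nat.choose (m+n) n := by
  induction n with
  | zero => simp
  | succ k ih =>
    have h1 : Nat.choose (2*(k+1)) (k+1) * (k+1) = 2*(2*k+1) * Nat.choose (2*k) k := by
      have hs : Nat.choose (2*k+1) k = Nat.choose (2*k+1) (k+1) := by
        rw [← Nat.choose_symm (by omega : k ≤ 2*k+1)]
        congr 1
        omega
      have e : 2*(k+1) = (2*k+1)+1 := by ring
      rw [e, Nat.choose_succ_succ (2*k+1) k, hs]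
      have h2' : Nat.choose (2*k+1) (k+1) * (k+1) = (2*k+1) * Nat.choose (2*k) k :=
        (Nat.add_one_mul_choose_eq (2*k) k).symm
      calc (Nat.choose (2*k+1) (k+1) + Nat.choose (2*k+1) (k+1)) * (k+1)
          = 2 * (Nat.choose (2*k+1) (k+1) * (k+1)) := by ring
        _ = 2 * ((2*k+1) * Nat.choose (2*k) k) := by rw [h2']
        _ = 2*(2*k+1) * Nat.choose (2*k) k := by ring
    have h2 : Nat.choose (m+(k+1)) (k+1) * (k+1) = (m+k+1) * Nat.choose (m+k) k :=
      (Nat.add_one_mul_choose_eq (m+k) k).symm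
    apply Nat.eq_of_mul_eq_mul_right (show 0 < k+1 by omega)
    calc (∏ j ∈ range (k+1), (m+j+1)) * Nat.choose (2*(k+1)) (k+1) * (k+1)
        = (∏ j ∈ range k, (m+j+1)) * (m+k+1) * (Nat.choose (2*(k+1)) (k+1) * (k+1)) := by
          rw [prod_range_succ]; ring
      _ = (m+k+1) * (2*(2*k+1)) * ((∏ j ∈ range k, (m+j+1)) * Nat.choose (2*k) k) := by
          rw [h1]; ring
      _ = (m+k+1) * (2*(2*k+1)) * ((∏ j ∈ range k, (2*(2*j+1))) * Nat.choose (m+k) k) := by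
          rw [ih]
      _ = (∏ j ∈ range (k+1), (2*(2*j+1))) * ((m+k+1) * Nat.choose (m+k) k) := by
          rw [prod_range_succ]; ring
      _ = (∏ j ∈ range (k+1), (2*(2*j+1))) * Nat.choose (m+(k+1)) (k+1) * (k+1) := by
          rw [← h2]; ring

-- product identity in ℝ
lemma prodID (n m : ℕ) (t : ℝ) :
    (∏ s ∈ range m, (t+(n:ℝ)-s)) * (∏ j ∈ range n, (t+(j:ℝ)+1-m))
      = (∏ j ∈ range n, (t+(j:ℝ)+1)) * (∏ s ∈ range m, (t-(s:ℝ))) := by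
  have key : ∀ k : ℕ, ∏ i ∈ range (m+k), (t+(n:ℝ)-i)
      = (∏ s ∈ range m, (t+(n:ℝ)-s)) * (∏ i ∈ range k, (t+(n:ℝ)-m-i)) := by
    intro k
    rw [Finset.prod_range_add]
    congr 1
    exact Finset.prod_congr rfl (fun i _ => by push_cast; ring)
  have h1 : ∏ j ∈ range n, (t+(j:ℝ)+1-m) = ∏ i ∈ range n, (t+(n:ℝ)-m-i) := by
    rw [← Finset.prod_range_reflect (fun j => t+(n:ℝ)-m-j) n]
    refine Finset.prod_congr rfl (fun j hj => ?_)
    have hj' := mem_range.mp hj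
    have : ((n - 1 - j : ℕ):ℝ) = (n:ℝ) - 1 - j := by
      have h' : (n - 1 - j) + (j + 1) = n := by omega
      have := congrArg (Nat.cast (R := ℝ)) h'
      push_cast at this
      linarith
    rw [this]
    ring
  have h2 : ∏ j ∈ range n, (t+(j:ℝ)+1) = ∏ i ∈ range n, (t+(n:ℝ)-i) := by
    rw [← Finset.prod_range_reflect (fun j => t+(n:ℝ)-j) n]
    refine Finset.prod_congr rfl (fun j hj => ?_)
    have hj' := mem_range.mp hj
    have : ((n - 1 - j : ℕ):ℝ) = (n:ℝ) - 1 - j := by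
      have h' : (n - 1 - j) + (j + 1) = n := by omega
      have := congrArg (Nat.cast (R := ℝ)) h'
      push_cast at this
      linarith
    rw [this]
    ring
  have key2 : ∏ i ∈ range (n+m), (t+(n:ℝ)-i)
      = (∏ j ∈ range n, (t+(n:ℝ)-j)) * (∏ i ∈ range m, (t+(n:ℝ)-n-i)) := by
    rw [Finset.prod_range_add]
    congr 1
    exact Finset.prod_congr rfl (fun i _ => by push_cast; ring)
  have h3 : ∏ s ∈ range m, (t-(s:ℝ)) = ∏ i ∈ range m, (t+(n:ℝ)-n-i) :=
    Finset.prod_congr rfl (fun i _ => by ring)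
  rw [h1, h2, h3, ← key n, ← key2, show m+n = n+m by omega]

lemma closed_r (n m : ℕ) (t : ℝ) :
    (∏ j ∈ range n, (((m:ℝ)+j+1)*(t+j+1-m))) *
      ((-1)^n * (Nat.choose (2*n) n : ℝ) * binom t m * binom (t+(n:ℝ)) m)
      = (-1)^n * (Nat.choose (m+n) n : ℝ) *
        (∏ j ∈ range n, (2*(2*(j:ℝ)+1)*(t+j+1))) * (binom t m)^2 := by
  have hfac : (Nat.factorial m : ℝ) ≠ 0 := Nat.cast_ne_zero.2 (Nat.factorial_ne_zero m)
  have hbm : binom t m * (Nat.factorial m : ℝ) = ∏ s ∈ range m, (t-(s:ℝ)) := by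
    rw [binom]; field_simp
  have hbn : binom (t+(n:ℝ)) m * (Nat.factorial m : ℝ) = ∏ s ∈ range m, (t+(n:ℝ)-s) := by
    rw [binom]; field_simp
  have hscal : (∏ j ∈ range n, ((m:ℝ)+j+1)) * (Nat.choose (2*n) n : ℝ)
      = (∏ j ∈ range n, (2*(2*(j:ℝ)+1))) * (Nat.choose (m+n) n : ℝ) := by
    exact_mod_cast scalar_nat n m
  have hpid := prodID n m t
  rw [Finset.prod_mul_distrib, Finset.prod_mul_distrib]
  apply mul_left_cancel₀ (pow_ne_zero 2 hfac)
  set P1 := ∏ j ∈ range n, ((m:ℝ)+j+1) with hP1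
  set P2 := ∏ j ∈ range n, (t+(j:ℝ)+1-m) with hP2
  set Q2 := ∏ j ∈ range n, (2*(2*(j:ℝ)+1)) with hQ2
  set Q3 := ∏ j ∈ range n, (t+(j:ℝ)+1) with hQ3
  set Pm := ∏ s ∈ range m, (t-(s:ℝ)) with hPm
  set Pn := ∏ s ∈ range m, (t+(n:ℝ)-s) with hPn
  set bm := binom t m
  set bn := binom (t+(n:ℝ)) m
  set fm := (Nat.factorial m : ℝ)
  set c2 := (Nat.choose (2*n) n : ℝ)
  set cmn := (Nat.choose (m+n) n : ℝ)
  linear_combination ((-1:ℝ)^n * P2 * bm * bn * fm^2) * hscal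
    + ((-1:ℝ)^n * Q2 * cmn * bm * fm * P2) * hbn
    + ((-1:ℝ)^n * Q2 * cmn * bm * fm) * hpid
    + (-(-1:ℝ)^n * Q2 * cmn * bm * fm * Q3) * hbm

lemma binom_cont (k : ℕ) : Continuous fun x : ℝ => binom x k := by
  have h : Continuous fun x : ℝ => ∏ i ∈ range k, (x - (i:ℝ)) :=
    continuous_finset_prod _ (fun i _ => by continuity)
  exact h.div_const _

theorem fsum_eq (n m : ℕ) (hnm : n < m) (t : ℝ) :
    (Nat.choose (m+n) n : ℝ) * fsum n m t
      = (-1)^n * (Nat.choose (2*n) n : ℝ) * binom t m * binom (t+(n:ℝ)) m := by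
  set φ : ℝ → ℝ := fun x => (Nat.choose (m+n) n : ℝ) * fsum n m x with hφ
  set ψ : ℝ → ℝ := fun x => (-1)^n * (Nat.choose (2*n) n : ℝ) * binom x m * binom (x+(n:ℝ)) m
    with hψ
  suffices h : φ = ψ by
    have := congrFun h t
    simpa [hφ, hψ] using this
  set S : Set ℝ := (fun j : ℕ => (m:ℝ) - j - 1) '' (range n : Set ℕ) with hS
  have hSfin : S.Finite := Set.Finite.image _ (range n).finite_toSet
  have hdense : Dense Sᶜ := (hSfin.countable).dense_compl ℝ
  have hcontφ : Continuous φ := by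
    apply Continuous.mul continuous_const
    apply continuous_finset_sum
    intro j _
    unfold Fterm
    exact ((continuous_const.mul (binom_cont (m+n-j))).mul (binom_cont (m-n+j)))
  have hcontψ : Continuous ψ := by
    apply Continuous.mul
    · exact continuous_const.mul (binom_cont m)
    · exact (binom_cont m).comp (by continuity : Continuous fun x : ℝ => x + (n:ℝ))
  apply Continuous.ext_on hdense hcontφ hcontψ
  intro x hx
  have hA : (∏ j ∈ range n, (((m:ℝ)+j+1)*(x+j+1-m))) ≠ 0 := by
    apply Finset.prod_ne_zero_iff.mpr
    intro j hj
    apply mul_ne_zero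
    · positivity
    · intro h0
      apply hx
      refine ⟨j, by simpa using hj, ?_⟩
      show (m:ℝ) - j - 1 = x
      linarith
  apply mul_left_cancel₀ hA
  have h1 := closed n m hnm x
  have h2 := closed_r n m x
  simp only [hφ, hψ]
  calc (∏ j ∈ range n, (((m:ℝ)+j+1)*(x+j+1-m))) * ((Nat.choose (m+n) n : ℝ) * fsum n m x)
      = (Nat.choose (m+n) n : ℝ) * ((∏ j ∈ range n, (((m:ℝ)+j+1)*(x+j+1-m))) * fsum n m x) := by
        ring
    _ = (Nat.choose (m+n) n : ℝ) *
        ((-1)^n * (∏ j ∈ range n, (2*(2*(j:ℝ)+1)*(x+j+1))) * (binom x m)^2) := by rw [h1]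
    _ = (∏ j ∈ range n, (((m:ℝ)+j+1)*(x+j+1-m))) *
        ((-1)^n * (Nat.choose (2*n) n : ℝ) * binom x m * binom (x+(n:ℝ)) m) := by
        rw [h2]; ring


theorem stmt_4 (p : ℕ) (hp : 2 ≤ p) (t : ℝ) :
    ∑ i ∈ Finset.range (2*p + 1), (-1 : ℝ)^i * (Nat.choose (2*p) i : ℝ) *
        binom t (4*p - 1 - i) * binom t (2*p + i - 1) =
      ((-1 : ℝ)^p * (Nat.choose (2*p) p : ℝ) * (4*(p : ℝ))^(3*p - 1) /
          ((Nat.choose (4*p - 1) p : ℝ) * (Nat.factorial (3*p - 1) : ℝ)^2)) *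
        ∏ i ∈ Finset.Icc 1 (3*p - 1),
          ((t^2 - 2*t*((p : ℝ) - 1)) / (4*p) - hwt p i) := by
  set N := 3*p - 1 with hN
  have h4p : (4*(p:ℝ)) ≠ 0 := by positivity
  have hfacN : ((N.factorial : ℕ):ℝ) ≠ 0 := Nat.cast_ne_zero.2 (Nat.factorial_ne_zero N)
  have hC : ((Nat.choose (4*p-1) p : ℕ):ℝ) ≠ 0 :=
    Nat.cast_ne_zero.2 (Nat.choose_pos (by omega)).ne'
  -- LHS is fsum
  have hLHS : (∑ i ∈ Finset.range (2*p + 1), (-1 : ℝ)^i * (Nat.choose (2*p) i : ℝ) *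
        binom t (4*p - 1 - i) * binom t (2*p + i - 1)) = fsum p N t := by
    apply Finset.sum_congr rfl
    intro i hi
    have hi' : i ≤ 2*p := by simpa [Nat.lt_succ_iff] using mem_range.mp hi
    have e1 : 4*p - 1 - i = N + p - i := by omega
    have e2 : 2*p + i - 1 = N - p + i := by omega
    rw [e1, e2]
    simp [Fterm]
  -- key identity
  have key := fsum_eq p N (by omega) t
  rw [show N + p = 4*p - 1 by omega] at key
  -- product over Icc
  have himg : Finset.Icc 1 N = Finset.image (fun j => j+1) (Finset.range N) := by
    rw [Finset.range_eq_Ico, ← Finset.Ico_add_one_right_eq_Icc]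
    simpa using (Finset.image_add_right_Ico 0 N 1).symm
  have hfac1 : ∀ j ∈ range N,
      ((t^2 - 2*t*((p:ℝ)-1)) / (4*p) - hwt p (j+1))
        = (t - j) * (t + (j:ℝ) - 2*p + 2) / (4*(p:ℝ)) := by
    intro j _
    rw [hwt]
    push_cast
    field_simp
    ring
  have hprod1 : ∏ j ∈ range N, (t - (j:ℝ)) = binom t N * (N.factorial : ℝ) := by
    rw [binom]; field_simp
  have hprod2 : ∏ j ∈ range N, (t + (j:ℝ) - 2*p + 2)
      = binom (t+(p:ℝ)) N * (N.factorial : ℝ) := by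
    rw [binom]
    field_simp
    rw [← Finset.prod_range_reflect (fun j => t + (j:ℝ) - 2*p + 2) N]
    apply Finset.prod_congr rfl
    intro j hj
    have hj' := mem_range.mp hj
    have hcast : ((N - 1 - j : ℕ):ℝ) = (N:ℝ) - 1 - j := by
      have h' : (N - 1 - j) + (j + 1) = N := by omega
      have := congrArg (Nat.cast (R := ℝ)) h'
      push_cast at this
      linarith
    have hcastN : ((N:ℕ):ℝ) = 3*(p:ℝ) - 1 := by
      have h' : N + 1 = 3*p := by omega
      have := congrArg (Nat.cast (R := ℝ)) h'
      push_cast at this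
      linarith
    rw [hcast, hcastN]
    ring
  have hprod : ∏ i ∈ Finset.Icc 1 N, ((t^2 - 2*t*((p:ℝ)-1)) / (4*p) - hwt p i)
      = (binom t N * (N.factorial : ℝ)) * (binom (t+(p:ℝ)) N * (N.factorial : ℝ))
          / (4*(p:ℝ))^N := by
    rw [himg, Finset.prod_image (fun a _ b _ h => by omega)]
    rw [Finset.prod_congr rfl hfac1]
    rw [show ∀ f g : ℕ → ℝ, (∏ j ∈ range N, (f j * g j / (4*(p:ℝ)))) =
        (∏ j ∈ range N, f j * g j) / (4*(p:ℝ))^N from fun f g => by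
      rw [Finset.prod_div_distrib, Finset.prod_const, Finset.card_range]]
    rw [Finset.prod_mul_distrib, hprod1, hprod2]
  rw [hLHS, hprod]
  -- now pure algebra with key
  have hCk : fsum p N t = (-1)^p * (Nat.choose (2*p) p : ℝ) * binom t N * binom (t+(p:ℝ)) N
      / (Nat.choose (4*p-1) p : ℝ) := by
    field_simp
    linarith [key]
  rw [hCk]
  have hpow : (4*(p:ℝ))^N ≠ 0 := pow_ne_zero _ h4p
  field_simp
end
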